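/- Let α be a C² regular closed plane curve (periodic with period 1, α′ never 0) whose signed curvature κ_s has only finitely many zeros in one period and never changes sign (α is in spiral form). Then the total absolute curvature of α over one period, ∫ |κ_s| |α′(t)| dt, equals 2π·m, where m is the number of local maxima of t ↦ ⟨α(t), w⟩ over one period for any (equivalently, every) unit vector w in the plane. -/

import Mathlib

open Real Set
open scoped RealInnerProductSpace

noncomputable section

/-- ℝ² with the Euclidean inner product. -/
abbrev E2 : Type := EuclideanSpace ℝ (Fin 2)

/-- The signed curvature `κ_s = (x′y″ − y′x″)/((x′)² + (y′)²)^{3/2}` of a plane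
curve `α = (x, y)`. -/
def signedCurv2 (α : ℝ → E2) (t : ℝ) : ℝ :=
  (deriv (fun s => α s 0) t * deriv (deriv (fun s => α s 1)) t -
    deriv (fun s => α s 1) t * deriv (deriv (fun s => α s 0)) t) / ‖deriv α t‖ ^ 3

/-- Rotation of the plane by angle `θ`. -/
def rot2 (θ : ℝ) (x : E2) : E2 :=
  WithLp.toLp 2 ![Real.cos θ * x 0 - Real.sin θ * x 1, Real.sin θ * x 0 + Real.cos θ * x 1]

/-- The unit normal of `α` at parameter `t`: the rotation by `π/2` of the unit
tangent vector. -/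
def unitNormal (α : ℝ → E2) (t : ℝ) : E2 :=
  rot2 (Real.pi / 2) (‖deriv α t‖⁻¹ • deriv α t)

/-- The number of local maxima of a (1-periodic) real function over one period. -/
def numLocalMax (f : ℝ → ℝ) : ℕ :=
  Set.ncard {t : ℝ | t ∈ Set.Ico (0:ℝ) 1 ∧ IsLocalMax f t}

/-- The set of local extrema of a (1-periodic) real function in one period. -/
def extremaSet (f : ℝ → ℝ) : Set ℝ :=
  {t : ℝ | t ∈ Set.Ico (0:ℝ) 1 ∧ (IsLocalMax f t ∨ IsLocalMin f t)}

/-- `μ̂(w, α)`: the number of local extrema of `t ↦ ⟪α(t), w⟫` over one period. -/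
def muHat (α : ℝ → E2) (w : E2) : ℕ :=
  Set.ncard (extremaSet (fun s => ⟪α s, w⟫))

/-- `g` changes sign at `t₀`: every neighbourhood of `t₀` contains points where `g`
is positive and points where it is negative. -/
def SignChangeAt (g : ℝ → ℝ) (t₀ : ℝ) : Prop :=
  ∀ ε > 0, (∃ s : ℝ, |s - t₀| < ε ∧ 0 < g s) ∧ (∃ s : ℝ, |s - t₀| < ε ∧ g s < 0)

/-- The set of inflection points (parameters where the signed curvature vanishes) of
`α` in one period. -/
def inflectionSet (α : ℝ → E2) : Set ℝ :=
  {t : ℝ | t ∈ Set.Ico (0:ℝ) 1 ∧ signedCurv2 α t = 0}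

/-!
Write the complex velocity as `α' = |α'| e^{iθ}` with a continuous tangent angle `θ`, taken as
the imaginary part of a logarithm of `α'`; then `θ' = κ_s |α'|`. If `ε = ±1` is the sign of
`κ_s`, the angle `εθ` is strictly increasing, because `κ_s` vanishes only on the countable set
of translates of the inflection points, and by periodicity it increases by some `2πn` over a
period: this is the total absolute curvature. On the other hand `⟨α, w⟩′ = |α'| cos(εθ − ψ)`,
so the local maxima of `⟨α, w⟩` are the parameters with `εθ ≡ ψ + π/2 (mod 2π)`, and a
continuous increasing function with increment `2πn` meets such a residue class exactly `n`
times in a period.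
-/

open Filter Topology

section LocalMax

lemma not_isLocalMax_of_deriv_pos_right {f : ℝ → ℝ} {b : ℝ} (hf : Differentiable ℝ f)
    (h : ∀ᶠ x in 𝓝[>] b, 0 < deriv f x) : ¬ IsLocalMax f b := by
  intro hmax
  obtain ⟨c, hbc, hc⟩ := (nhdsGT_basis b).eventually_iff.mp h
  have hmono : StrictMonoOn f (Icc b c) :=
    strictMonoOn_of_deriv_pos (convex_Icc b c) hf.continuous.continuousOn
      (by rwa [interior_Icc])
  obtain ⟨x, hxb, hx⟩ :=
    ((hmax.filter_mono nhdsWithin_le_nhds).and (Ioo_mem_nhdsGT hbc)).exists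
  exact hxb.not_gt (hmono (left_mem_Icc.mpr hbc.le) (Ioo_subset_Icc_self hx) hx.1)

variable {Θ : ℝ → ℝ}

lemma eventually_sign_sin_sub (hΘ : Continuous Θ) (hmono : StrictMono Θ) (t₀ : ℝ) :
    (∀ᶠ s in 𝓝[<] t₀, sin (Θ s - Θ t₀) < 0) ∧ ∀ᶠ s in 𝓝[>] t₀, 0 < sin (Θ s - Θ t₀) := by
  have hnear : ∀ᶠ s in 𝓝 t₀, Θ s ∈ Ioo (Θ t₀ - π) (Θ t₀ + π) :=
    hΘ.continuousAt.eventually_mem (Ioo_mem_nhds (by linarith [pi_pos]) (by linarith [pi_pos]))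
  constructor
  · filter_upwards [hnear.filter_mono nhdsWithin_le_nhds, self_mem_nhdsWithin] with s hs hlt
    exact sin_neg_of_neg_of_neg_pi_lt (by linarith [hmono hlt]) (by linarith [hs.1])
  · filter_upwards [hnear.filter_mono nhdsWithin_le_nhds, self_mem_nhdsWithin] with s hs hgt
    exact sin_pos_of_pos_of_lt_pi (by linarith [hmono hgt]) (by linarith [hs.2])

variable {f r : ℝ → ℝ} {φ : ℝ}

lemma isLocalMax_iff_of_hasDerivAt_cos (hΘ : Continuous Θ) (hmono : StrictMono Θ)
    (hr : ∀ t, 0 < r t) (hf : ∀ t, HasDerivAt f (r t * cos (Θ t - φ)) t) (t₀ : ℝ) :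
    IsLocalMax f t₀ ↔ ∃ k : ℤ, Θ t₀ = φ + π / 2 + k * (2 * π) := by
  have hdiff : Differentiable ℝ f := fun t => (hf t).differentiableAt
  obtain ⟨hleft, hright⟩ := eventually_sign_sin_sub hΘ hmono t₀
  constructor
  · intro hmax
    have hcos : cos (Θ t₀ - φ) = 0 := by
      simpa [(hr t₀).ne'] using (hf t₀).deriv.symm.trans hmax.deriv_eq_zero
    obtain ⟨j, hj⟩ := cos_eq_zero_iff.mp hcos
    obtain ⟨k, rfl | rfl⟩ := j.even_or_odd'
    · exact ⟨k, by push_cast at hj; linarith⟩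
    · refine absurd hmax (not_isLocalMax_of_deriv_pos_right hdiff ?_)
      -- odd `j`: `Θ t₀ ≡ φ - π / 2`, and `f` increases just to the right of `t₀`
      filter_upwards [hright] with s hs
      have hcos_s : cos (Θ s - φ) = sin (Θ s - Θ t₀) := by
        rw [show Θ s - φ = Θ s - Θ t₀ - π / 2 + (k + 1 : ℤ) * (2 * π) by
          push_cast at hj ⊢; linarith, cos_add_int_mul_two_pi, cos_sub_pi_div_two]
      rw [(hf s).deriv, hcos_s]
      exact mul_pos (hr s) hs
  · rintro ⟨k, hk⟩
    have hcos_s : ∀ s, cos (Θ s - φ) = -sin (Θ s - Θ t₀) := fun s => by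
      rw [show Θ s - φ = Θ s - Θ t₀ + π / 2 + k * (2 * π) by linarith,
        cos_add_int_mul_two_pi, cos_add_pi_div_two]
    refine isLocalMax_of_deriv hdiff.continuous.continuousAt
      (Eventually.of_forall fun s => hdiff s) ?_ ?_
    · filter_upwards [hleft] with s hs
      rw [(hf s).deriv, hcos_s]
      nlinarith [hr s]
    · filter_upwards [hright] with s hs
      rw [(hf s).deriv, hcos_s]
      nlinarith [hr s]

end LocalMax

section Counting

lemma ncard_intCast_preimage_Ico (x : ℝ) (n : ℕ) :
    ((↑) ⁻¹' Ico x (x + n) : Set ℤ).ncard = n := by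
  have h : ((↑) ⁻¹' Ico x (x + n) : Set ℤ) = Ico ⌈x⌉ (⌈x⌉ + n) := by
    ext k
    simp only [mem_preimage, mem_Ico, Int.ceil_le, ← sub_lt_iff_lt_add, Int.lt_ceil]
    push_cast
    rfl
  rw [h, ← Finset.coe_Ico, ncard_coe_finset, Int.card_Ico]
  omega

lemma ncard_setOf_eq_add_int_mul {Θ : ℝ → ℝ} (hΘ : Continuous Θ) (hmono : StrictMono Θ)
    {a b c p : ℝ} (hp : 0 < p) {n : ℕ} (hn : Θ b = Θ a + n * p) :
    {t ∈ Ico a b | ∃ k : ℤ, Θ t = c + k * p}.ncard = n := by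
  have hab : a ≤ b := hmono.le_iff_le.mp (by nlinarith [n.cast_nonneg (α := ℝ)])
  set lattice : ℤ → ℝ := fun k => c + k * p
  have himage : Θ '' {t ∈ Ico a b | ∃ k : ℤ, Θ t = c + k * p} =
      lattice '' ((↑) ⁻¹' Ico ((Θ a - c) / p) ((Θ a - c) / p + n)) := by
    ext v
    constructor
    · rintro ⟨t, ⟨⟨hat, htb⟩, k, hk⟩, rfl⟩
      have h1 := hmono.monotone hat
      have h2 := hmono htb
      refine ⟨k, ⟨?_, ?_⟩, hk.symm⟩
      · rw [div_le_iff₀ hp]; linarith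
      · rw [div_add' _ _ _ hp.ne', lt_div_iff₀ hp]; linarith
    · rintro ⟨k, ⟨hk1, hk2⟩, rfl⟩
      rw [div_le_iff₀ hp] at hk1
      rw [div_add' _ _ _ hp.ne', lt_div_iff₀ hp] at hk2
      obtain ⟨t, ht, htk⟩ := intermediate_value_Ico hab hΘ.continuousOn
        (⟨by linarith, by linarith⟩ : lattice k ∈ Ico (Θ a) (Θ b))
      exact ⟨t, ⟨ht, k, htk⟩, htk⟩
  have hlattice : lattice.Injective := fun k l hkl => by
    simpa [lattice, hp.ne'] using hkl
  rw [← ncard_image_of_injective _ hmono.injective, himage,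
    ncard_image_of_injective _ hlattice, ncard_intCast_preimage_Ico]

lemma numLocalMax_eq_of_hasDerivAt_cos {Θ f r : ℝ → ℝ} {φ : ℝ} (hΘ : Continuous Θ)
    (hmono : StrictMono Θ) (hr : ∀ t, 0 < r t)
    (hf : ∀ t, HasDerivAt f (r t * cos (Θ t - φ)) t) {n : ℕ}
    (hn : Θ 1 = Θ 0 + n * (2 * π)) :
    numLocalMax f = n := by
  simp_rw [numLocalMax, isLocalMax_iff_of_hasDerivAt_cos hΘ hmono hr hf]
  exact ncard_setOf_eq_add_int_mul hΘ hmono two_pi_pos hn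

end Counting

lemma exists_abs_eq_mul_of_nonneg_or_nonpos {g : ℝ → ℝ}
    (h : (∀ t, 0 ≤ g t) ∨ ∀ t, g t ≤ 0) : ∃ ε : ℝ, |ε| = 1 ∧ ∀ t, |g t| = ε * g t :=
  h.elim (fun h => ⟨1, abs_one, fun t => by simp [abs_of_nonneg (h t)]⟩)
    fun h => ⟨-1, by simp, fun t => by simp [abs_of_nonpos (h t)]⟩

lemma strictMono_of_hasDerivAt_nonneg_of_countable {g g' : ℝ → ℝ}
    (hg : ∀ x, HasDerivAt g (g' x) x) (hnn : ∀ x, 0 ≤ g' x)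
    (hcount : {x | g' x = 0}.Countable) : StrictMono g := by
  have hmono : Monotone g := monotone_of_hasDerivAt_nonneg hg hnn
  refine hmono.strictMono_of_injective fun s t hst => ?_
  by_contra hne
  wlog hlt : s < t generalizing s t
  · exact this t s hst.symm (Ne.symm hne) ((not_lt.mp hlt).lt_of_ne' hne)
  have hzero : Ioo s t ⊆ {x | g' x = 0} := fun x hx => by
    have hconst : g =ᶠ[𝓝 x] fun _ => g s := by
      filter_upwards [Ioo_mem_nhds hx.1 hx.2] with y hy
      exact le_antisymm (hst ▸ hmono hy.2.le) (hmono hy.1.le)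
    exact (hg x).unique ((hasDerivAt_const x (g s)).congr_of_eventuallyEq hconst)
  exact hlt.not_ge (Cardinal.Real.Ioo_countable_iff.mp (hcount.mono hzero))

lemma Function.Periodic.deriv {E : Type*} [NormedAddCommGroup E] [NormedSpace ℝ E]
    {f : ℝ → E} {c : ℝ} (hf : Periodic f c) : Periodic (deriv f) c := fun t => by
  rw [← deriv_comp_add_const, show (fun x => f (x + c)) = f from funext hf]

lemma Function.Periodic.countable_preimage_of_countable_Ico {β : Type*} {g : ℝ → β}
    (hg : Periodic g 1) {s : Set β} (h : {t ∈ Ico (0 : ℝ) 1 | g t ∈ s}.Countable) :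
    (g ⁻¹' s).Countable := by
  refine (countable_iUnion fun k : ℤ => h.image (· + k)).mono fun t ht => ?_
  refine mem_iUnion.mpr ⟨⌊t⌋, Int.fract t, ⟨⟨Int.fract_nonneg t, Int.fract_lt_one t⟩, ?_⟩,
    Int.fract_add_floor t⟩
  rwa [Int.fract, ← mul_one (⌊t⌋ : ℝ), hg.sub_int_mul_eq]

section LogLift

open Complex

lemma exists_hasDerivAt_exp_eq {v : ℝ → ℂ} (hv : ContDiff ℝ 1 v) (hv0 : ∀ t, v t ≠ 0) :
    ∃ ℓ : ℝ → ℂ, (∀ t, HasDerivAt ℓ (deriv v t / v t) t) ∧ ∀ t, exp (ℓ t) = v t := by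
  have hcont : Continuous fun t => deriv v t / v t :=
    (hv.continuous_deriv le_rfl).div hv.continuous hv0
  set ℓ : ℝ → ℂ := fun t => log (v 0) + ∫ s in (0 : ℝ)..t, deriv v s / v s
  have hℓ : ∀ t, HasDerivAt ℓ (deriv v t / v t) t := fun t =>
    (intervalIntegral.integral_hasDerivAt_right (hcont.intervalIntegrable _ _)
      hcont.aestronglyMeasurable.stronglyMeasurableAtFilter hcont.continuousAt).const_add _
  refine ⟨ℓ, hℓ, fun t => ?_⟩
  have hderiv : ∀ s, HasDerivAt (fun s => v s * exp (-ℓ s)) 0 s := fun s => by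
    refine ((hv.differentiable one_ne_zero s).hasDerivAt.mul (hℓ s).neg.cexp).congr_deriv ?_
    field_simp [hv0 s]
    ring
  have hconst := is_const_of_deriv_eq_zero (fun s => (hderiv s).differentiableAt)
    (fun s => (hderiv s).deriv) t 0
  have hone : v t * (exp (ℓ t))⁻¹ = 1 := by
    rw [← Complex.exp_neg, hconst]
    simp [ℓ, Complex.exp_neg, exp_log (hv0 0), hv0 0]
  exact ((mul_inv_eq_one₀ (Complex.exp_ne_zero _)).mp hone).symm

lemma exists_hasDerivAt_eq_norm_mul_exp {v : ℝ → ℂ} (hv : ContDiff ℝ 1 v)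
    (hv0 : ∀ t, v t ≠ 0) :
    ∃ θ : ℝ → ℝ, (∀ t, HasDerivAt θ (deriv v t / v t).im t) ∧
      ∀ t, v t = ‖v t‖ * exp (θ t * I) := by
  obtain ⟨ℓ, hℓ, hexp⟩ := exists_hasDerivAt_exp_eq hv hv0
  refine ⟨fun t => (ℓ t).im, fun t => imCLM.hasFDerivAt.comp_hasDerivAt t (hℓ t),
    fun t => ?_⟩
  rw [← hexp, norm_exp]
  conv_lhs => rw [← re_add_im (ℓ t), Complex.exp_add, ← ofReal_exp]

end LogLift

section PlaneCurve

open Complex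

def planeToComplex : E2 ≃ₗᵢ[ℝ] ℂ := Complex.orthonormalBasisOneI.repr.symm

@[simp]
lemma planeToComplex_apply (x : E2) : planeToComplex x = x 0 + x 1 * I := rfl

lemma deriv_euclidean_apply {ι : Type*} [Fintype ι] {f : ℝ → EuclideanSpace ℝ ι} {t : ℝ}
    (hf : DifferentiableAt ℝ f t) (i : ι) : deriv (fun s => f s i) t = deriv f t i :=
  ((EuclideanSpace.proj i : EuclideanSpace ℝ ι →L[ℝ] ℝ).hasFDerivAt.comp_hasDerivAt t
    hf.hasDerivAt).deriv

variable {α : ℝ → E2}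

lemma periodic_signedCurv2 {c : ℝ} (hper : Function.Periodic α c) :
    Function.Periodic (signedCurv2 α) c := by
  have hcoord : ∀ i, Function.Periodic (fun s => α s i) c := fun i t => by simp only [hper t]
  intro t
  simp only [signedCurv2, (hcoord 0).deriv t, (hcoord 1).deriv t, (hcoord 0).deriv.deriv t,
    (hcoord 1).deriv.deriv t, hper.deriv t]

lemma continuous_signedCurv2 (hα : ContDiff ℝ 2 α) (hreg : ∀ t, deriv α t ≠ 0) :
    Continuous (signedCurv2 α) := by
  have hcoord : ∀ i, Continuous (deriv fun s => α s i) ∧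
      Continuous (deriv (deriv fun s => α s i)) := fun i => by
    have hi : ContDiff ℝ (1 + 1) (fun s => α s i) := contDiff_euclidean.mp hα i
    exact ⟨hi.continuous_deriv (by norm_num), hi.deriv'.continuous_deriv le_rfl⟩
  exact (((hcoord 0).1.mul (hcoord 1).2).sub ((hcoord 1).1.mul (hcoord 0).2)).div
    ((hα.continuous_deriv one_le_two).norm.pow 3)
    fun t => pow_ne_zero 3 (norm_ne_zero_iff.mpr (hreg t))

lemma signedCurv2_mul_norm_deriv (hα : ContDiff ℝ 2 α) (t : ℝ) :
    signedCurv2 α t * ‖deriv α t‖ =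
      (deriv (fun s => planeToComplex (deriv α s)) t / planeToComplex (deriv α t)).im := by
  have hα1 : Differentiable ℝ α := hα.differentiable two_ne_zero
  have hα2 : Differentiable ℝ (deriv α) :=
    (hα.deriv' (n := 1)).differentiable one_ne_zero
  have hcoord : ∀ i, deriv (fun s => α s i) = fun s => deriv α s i :=
    fun i => funext fun s => deriv_euclidean_apply (hα1 s) i
  have hv : HasDerivAt (fun s => planeToComplex (deriv α s))
      (planeToComplex (deriv (deriv α) t)) t :=
    planeToComplex.toContinuousLinearEquiv.hasFDerivAt.comp_hasDerivAt t (hα2 t).hasDerivAt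
  rw [hv.deriv]
  simp only [signedCurv2, hcoord, deriv_euclidean_apply (hα2 t)]
  rw [← planeToComplex.norm_map, div_im, normSq_eq_norm_sq]
  generalize ‖planeToComplex (deriv α t)‖ = r
  simp only [planeToComplex_apply, add_re, add_im, ofReal_re, ofReal_im, mul_re, mul_im, I_re,
    I_im]
  rcases eq_or_ne r 0 with rfl | hr
  · simp
  · field_simp
    ring

lemma exists_tangentAngle (hα : ContDiff ℝ 2 α) (hreg : ∀ t, deriv α t ≠ 0) :
    ∃ θ : ℝ → ℝ, (∀ t, HasDerivAt θ (signedCurv2 α t * ‖deriv α t‖) t) ∧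
      ∀ t, planeToComplex (deriv α t) = ‖deriv α t‖ * exp (θ t * I) := by
  have hv : ContDiff ℝ 1 fun s => planeToComplex (deriv α s) :=
    planeToComplex.toContinuousLinearEquiv.contDiff.comp (hα.deriv' (n := 1))
  obtain ⟨θ, hθ', hθ⟩ := exists_hasDerivAt_eq_norm_mul_exp hv
    fun t => planeToComplex.map_ne_zero_iff.mpr (hreg t)
  refine ⟨θ, fun t => signedCurv2_mul_norm_deriv hα t ▸ hθ' t, fun t => ?_⟩
  simpa only [LinearIsometryEquiv.norm_map] using hθ t

lemma countable_setOf_signedCurv2_eq_zero (hper : Function.Periodic α 1)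
    (hfin : (inflectionSet α).Finite) : {t | signedCurv2 α t = 0}.Countable :=
  (periodic_signedCurv2 hper).countable_preimage_of_countable_Ico (s := {0}) hfin.countable

lemma exists_strictMono_tangentAngle (hα : ContDiff ℝ 2 α) (hper : Function.Periodic α 1)
    (hreg : ∀ t, deriv α t ≠ 0) (hfin : (inflectionSet α).Finite)
    (hspiral : (∀ t, 0 ≤ signedCurv2 α t) ∨ ∀ t, signedCurv2 α t ≤ 0) :
    ∃ Θ : ℝ → ℝ, StrictMono Θ ∧ (∀ t, HasDerivAt Θ (|signedCurv2 α t| * ‖deriv α t‖) t) ∧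
      ∃ ε : ℝ, |ε| = 1 ∧
        ∀ t, planeToComplex (deriv α t) = ‖deriv α t‖ * exp (↑(ε * Θ t) * I) := by
  obtain ⟨θ, hθ', hθ⟩ := exists_tangentAngle hα hreg
  obtain ⟨ε, hε, hεκ⟩ := exists_abs_eq_mul_of_nonneg_or_nonpos hspiral
  have hΘ' : ∀ t, HasDerivAt (fun t => ε * θ t) (|signedCurv2 α t| * ‖deriv α t‖) t :=
    fun t => by simpa only [hεκ, mul_assoc] using (hθ' t).const_mul ε
  refine ⟨fun t => ε * θ t, ?_, hΘ', ε, hε, fun t => ?_⟩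
  · refine strictMono_of_hasDerivAt_nonneg_of_countable hΘ' (fun t => by positivity)
      ((countable_setOf_signedCurv2_eq_zero hper hfin).mono fun t ht => ?_)
    simpa [hreg t] using ht
  · rw [hθ t, ← mul_assoc, ← abs_mul_abs_self ε, hε, mul_one, one_mul]

lemma exists_nat_eq_add_mul_two_pi (hper : Function.Periodic α 1) (hreg : deriv α 0 ≠ 0)
    {Θ : ℝ → ℝ} (hlt : Θ 0 < Θ 1) {ε : ℝ} (hε : |ε| = 1)
    (hΘ : ∀ t, planeToComplex (deriv α t) = ‖deriv α t‖ * exp (↑(ε * Θ t) * I)) :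
    ∃ n : ℕ, Θ 1 = Θ 0 + n * (2 * π) := by
  have h1 := hΘ 1
  rw [show deriv α 1 = deriv α 0 by simpa using hper.deriv 0, hΘ 0] at h1
  have hexp : Circle.exp (ε * Θ 1) = Circle.exp (ε * Θ 0) :=
    Circle.ext (by simpa [Circle.coe_exp, hreg] using h1.symm)
  obtain ⟨N, hN⟩ := Circle.exp_eq_exp.mp hexp
  have hε2 : ε * ε = 1 := by rw [← abs_mul_abs_self, hε, one_mul]
  refine ⟨N.natAbs, ?_⟩
  calc Θ 1 = Θ 0 + |ε * (ε * Θ 1 - ε * Θ 0)| := by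
        rw [← mul_sub, ← mul_assoc, hε2, one_mul, abs_of_pos (sub_pos.mpr hlt)]; ring
    _ = Θ 0 + N.natAbs * (2 * π) := by
        rw [hN, add_sub_cancel_left, abs_mul, abs_mul, hε, abs_of_pos two_pi_pos,
          Nat.cast_natAbs, Int.cast_abs, one_mul]

lemma exists_hasDerivAt_inner_eq_norm_mul_cos (hα : Differentiable ℝ α) {Θ : ℝ → ℝ} {ε : ℝ}
    (hε : |ε| = 1)
    (hΘ : ∀ t, planeToComplex (deriv α t) = ‖deriv α t‖ * exp (↑(ε * Θ t) * I))
    {w : E2} (hw : ‖w‖ = 1) :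
    ∃ ψ : ℝ, ∀ t, HasDerivAt (fun t => ⟪α t, w⟫) (‖deriv α t‖ * Real.cos (Θ t - ψ)) t := by
  set φ := arg (planeToComplex w)
  have hφ : planeToComplex w = exp (φ * I) := by
    nth_rw 1 [← norm_mul_exp_arg_mul_I (planeToComplex w)]
    rw [planeToComplex.norm_map, hw, ofReal_one, one_mul]
  refine ⟨ε * φ, fun t => ((hα t).hasDerivAt.inner ℝ (hasDerivAt_const t w)).congr_deriv ?_⟩
  rw [inner_zero_right, zero_add, ← planeToComplex.inner_map_map, hΘ, hφ, Complex.inner,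
    map_mul, conj_ofReal, ← exp_conj, map_mul, conj_ofReal, conj_I, mul_left_comm,
    ← Complex.exp_add, mul_neg, ← sub_eq_add_neg, ← sub_mul, ← ofReal_sub, re_ofReal_mul,
    exp_ofReal_mul_I_re, ← Real.cos_abs, ← Real.cos_abs (Θ t - _)]
  have hε2 : ε * ε = 1 := by rw [← abs_mul_abs_self, hε, one_mul]
  rw [show φ - ε * Θ t = -ε * (Θ t - ε * φ) by linear_combination -φ * hε2, abs_mul, abs_neg,
    hε, one_mul]

end PlaneCurve

/-- The total absolute curvature over one period of a closed regular C² plane curve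
in spiral form equals `2π` times its spiral number, i.e. `2π` times the number of
local maxima with respect to any unit direction `w` in the plane. -/
theorem total_curvature_of_spiral_form (α : ℝ → E2)
    (hsmooth : ContDiff ℝ 2 α) (hper : Function.Periodic α 1)
    (hreg : ∀ t : ℝ, deriv α t ≠ 0)
    (hfin : (inflectionSet α).Finite)
    (hspiral : (∀ t : ℝ, 0 ≤ signedCurv2 α t) ∨ (∀ t : ℝ, signedCurv2 α t ≤ 0))
    (w : E2) (hw : ‖w‖ = 1) (m : ℕ)
    (hm : numLocalMax (fun t => ⟪α t, w⟫) = m) :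
    ∫ t in (0:ℝ)..1, |signedCurv2 α t| * ‖deriv α t‖ = 2 * Real.pi * m := by
  obtain ⟨Θ, hmono, hΘ', ε, hε, hΘ⟩ :=
    exists_strictMono_tangentAngle hsmooth hper hreg hfin hspiral
  obtain ⟨n, hn⟩ := exists_nat_eq_add_mul_two_pi hper (hreg 0) (hmono zero_lt_one) hε hΘ
  obtain ⟨ψ, hf⟩ :=
    exists_hasDerivAt_inner_eq_norm_mul_cos (hsmooth.differentiable two_ne_zero) hε hΘ hw
  -- the integrand is `Θ'`, so both sides equal `Θ 1 - Θ 0 = 2π n`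
  rw [← hm, numLocalMax_eq_of_hasDerivAt_cos
      (continuous_iff_continuousAt.mpr fun t => (hΘ' t).continuousAt) hmono
      (fun t => norm_pos_iff.mpr (hreg t)) hf hn,
    intervalIntegral.integral_eq_sub_of_hasDerivAt (fun t _ => hΘ' t)
      (((continuous_signedCurv2 hsmooth hreg).abs.mul
        (hsmooth.continuous_deriv one_le_two).norm).intervalIntegrable _ _), hn]
  ring

end
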